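/- For all real numbers a, b, c, m and s > 0, the exponentially tilted Gaussian–Φ convolution evaluates as ∫_ℝ (1/(s√(2π))) exp(−(x − m)²/(2s²)) e^{−bx} Φ(a x + c) dx = exp(−bm + b²s²/2) Φ((a(m − b s²) + c)/√(1 + a²s²)). -/

import Mathlib

/-!
Completing the square, `e^{-bx}` times the `N(m, s²)` density is `e^{-bm + b²s²/2}` times the
`N(m - bs², s²)` density, so it suffices to compute `E[Φ(aX + c)]` for `X ~ N(μ, v)`. Writing
`Φ(aX + c) = P(Z ≤ aX + c)` with `Z ~ N(0, 1)` independent of `X`, this is `P(Z - aX ≤ c)`, and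
`Z - aX ~ N(-aμ, 1 + a²v)` as a convolution of Gaussians.
-/

open MeasureTheory

/-- The standard normal density `N(x) := exp(−x²/2)/√(2π)`. -/
noncomputable def stdNormalDensity (x : ℝ) : ℝ :=
  Real.exp (-x ^ 2 / 2) / Real.sqrt (2 * Real.pi)

/-- The standard normal CDF `Φ(x) := ∫_{−∞}^x N(u) du`. -/
noncomputable def stdNormalCDF (x : ℝ) : ℝ :=
  ∫ u in Set.Iic x, stdNormalDensity u

open Real Set ProbabilityTheory
open scoped NNReal

lemma stdNormalDensity_eq_gaussianPDFReal : stdNormalDensity = gaussianPDFReal 0 1 := by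
  ext x
  simp [stdNormalDensity, gaussianPDFReal, div_eq_inv_mul]

lemma stdNormalCDF_eq_measureReal_Iic (x : ℝ) :
    stdNormalCDF x = (gaussianReal 0 1).real (Iic x) := by
  rw [measureReal_def, gaussianReal_apply_eq_integral _ one_ne_zero,
    ENNReal.toReal_ofReal (setIntegral_nonneg measurableSet_Iic fun y _ ↦
      gaussianPDFReal_nonneg 0 1 y), stdNormalCDF, stdNormalDensity_eq_gaussianPDFReal]

lemma gaussianReal_real_Iic (μ : ℝ) {v : ℝ≥0} (hv : v ≠ 0) (x : ℝ) :
    (gaussianReal μ v).real (Iic x) = stdNormalCDF ((x - μ) / √v) := by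
  have hsqrt : 0 < √(v : ℝ) := Real.sqrt_pos.2 (by positivity)
  have hmap : (gaussianReal 0 1).map (fun y ↦ √v * y + μ) = gaussianReal μ v := by
    rw [show (fun y ↦ √v * y + μ) = (· + μ) ∘ (√v * ·) from rfl,
      ← Measure.map_map (measurable_add_const μ) (measurable_const_mul _),
      gaussianReal_map_const_mul, gaussianReal_map_add_const]
    congr 1
    · simp
    · ext; simp
  have hpre : (fun y ↦ √v * y + μ) ⁻¹' Iic x = Iic ((x - μ) / √v) := by
    ext y
    simp only [mem_preimage, mem_Iic, le_div_iff₀ hsqrt]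
    constructor <;> intro h <;> linarith
  rw [← hmap, map_measureReal_apply (by fun_prop) measurableSet_Iic, hpre,
    stdNormalCDF_eq_measureReal_Iic]

lemma integral_measureReal_prodMk_preimage {α β : Type*} [MeasurableSpace α] [MeasurableSpace β]
    {μ : Measure α} {ν : Measure β} [SFinite μ] [IsFiniteMeasure ν] {s : Set (α × β)}
    (hs : MeasurableSet s) :
    ∫ x, ν.real (Prod.mk x ⁻¹' s) ∂μ = (μ.prod ν).real s := by
  rw [measureReal_def, Measure.prod_apply hs, ← integral_toReal
    (measurable_measure_prodMk_left hs).aemeasurable (ae_of_all _ fun _ ↦ measure_lt_top _ _)]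
  rfl

lemma integral_stdNormalCDF_affine_gaussianReal (a c μ : ℝ) (v : ℝ≥0) :
    ∫ x, stdNormalCDF (a * x + c) ∂gaussianReal μ v
      = stdNormalCDF ((a * μ + c) / √(1 + a ^ 2 * v)) := by
  set f : ℝ × ℝ → ℝ := fun p ↦ -a * p.1 + p.2
  have hf : Measurable f := by fun_prop
  have hlaw : ((gaussianReal μ v).prod (gaussianReal 0 1)).map f
      = gaussianReal (-a * μ) (.mk (a ^ 2) (sq_nonneg _) * v + 1) := by
    rw [show f = (fun p ↦ p.1 + p.2) ∘ Prod.map (-a * ·) id from rfl,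
      ← Measure.map_map (by fun_prop) (by fun_prop),
      ← Measure.map_prod_map _ _ (by fun_prop) measurable_id, Measure.map_id,
      gaussianReal_map_const_mul, ← Measure.conv, gaussianReal_conv_gaussianReal, add_zero]
    congr 2
    ext
    simp
  have hslice (x : ℝ) : stdNormalCDF (a * x + c)
      = (gaussianReal 0 1).real (Prod.mk x ⁻¹' (f ⁻¹' Iic c)) := by
    rw [stdNormalCDF_eq_measureReal_Iic]
    congr 1
    ext z
    simp only [f, mem_preimage, mem_Iic]
    constructor <;> intro h <;> linarith
  simp_rw [hslice]
  rw [integral_measureReal_prodMk_preimage (hf measurableSet_Iic),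
    ← map_measureReal_apply hf measurableSet_Iic, hlaw, gaussianReal_real_Iic _ (by positivity)]
  congr 2
  · ring
  · simp [add_comm]

lemma gaussianPDFReal_mul_exp_neg_mul (μ : ℝ) (v : ℝ≥0) (b x : ℝ) :
    gaussianPDFReal μ v x * exp (-b * x)
      = exp (-b * μ + b ^ 2 * v / 2) * gaussianPDFReal (μ - b * v) v x := by
  by_cases hv : v = 0
  · simp [hv]
  have hv' : (v : ℝ) ≠ 0 := NNReal.coe_ne_zero.2 hv
  simp only [gaussianPDFReal]
  rw [mul_assoc, ← exp_add, mul_left_comm, ← exp_add]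
  congr 2
  field_simp
  ring

lemma gaussianPDFReal_sq (m : ℝ) {s : ℝ} (hs : 0 < s) (x : ℝ) :
    gaussianPDFReal m (.mk (s ^ 2) (sq_nonneg s)) x
      = 1 / (s * √(2 * π)) * exp (-(x - m) ^ 2 / (2 * s ^ 2)) := by
  rw [gaussianPDFReal, NNReal.coe_mk, Real.sqrt_mul' _ (sq_nonneg s), Real.sqrt_sq hs.le,
    one_div, mul_comm s]

/-- For reals `a, b, c, m` and `s > 0`, the exponentially tilted Gaussian–Φ convolution
evaluates as
`∫_ℝ (1/(s√(2π))) exp(−(x−m)²/(2s²)) e^{−bx} Φ(ax+c) dx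
  = exp(−bm + b²s²/2) Φ((a(m − b s²) + c)/√(1 + a²s²))`. -/
theorem tilted_gaussian_phi_convolution (a b c m s : ℝ) (hs : 0 < s) :
    (∫ x : ℝ, (1 / (s * Real.sqrt (2 * Real.pi)))
        * Real.exp (-(x - m) ^ 2 / (2 * s ^ 2)) * Real.exp (-b * x)
        * stdNormalCDF (a * x + c))
      = Real.exp (-b * m + b ^ 2 * s ^ 2 / 2)
        * stdNormalCDF ((a * (m - b * s ^ 2) + c) / Real.sqrt (1 + a ^ 2 * s ^ 2)) := by
  set v : ℝ≥0 := .mk (s ^ 2) (sq_nonneg s)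
  have hv : v ≠ 0 := NNReal.coe_ne_zero.1 (pow_pos hs 2).ne'
  have htilt (x : ℝ) : 1 / (s * √(2 * π)) * exp (-(x - m) ^ 2 / (2 * s ^ 2)) * exp (-b * x)
        * stdNormalCDF (a * x + c)
      = exp (-b * m + b ^ 2 * v / 2)
        * (gaussianPDFReal (m - b * v) v x • stdNormalCDF (a * x + c)) := by
    rw [← gaussianPDFReal_sq m hs, gaussianPDFReal_mul_exp_neg_mul, smul_eq_mul, mul_assoc]
  simp_rw [htilt]
  rw [integral_const_mul, ← integral_gaussianReal_eq_integral_smul hv,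
    integral_stdNormalCDF_affine_gaussianReal]
  rfl
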